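/- For all nonnegative integers n ≥ k, Σ_{m=k}^{n} S1_C(n, m) · S2_C(m, k) = δ_{n,k} (Kronecker delta, as an element of K), where S1_C and S2_C denote the Stirling-Carlitz numbers of the first and second kind respectively. -/

import Mathlib

open scoped Classical
open PowerSeries Finset

noncomputable section

variable (F : Type) [Field F] [Fintype F]

/-- The rational function field `K = 𝔽_r(T)`. -/
abbrev K : Type := RatFunc F

/-- `r`, the cardinality of the finite field of constants. -/
def rr : ℕ := Fintype.card F

/-- The variable `T` of the rational function field. -/
def Tv : K F := RatFunc.X

/-- `[i] = T^{r^i} - T`. -/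
def br (i : ℕ) : K F := Tv F ^ (rr F) ^ i - Tv F

/-- `D_0 = 1`, `D_i = [i] · D_{i-1}^r`. -/
def D : ℕ → K F
  | 0 => 1
  | i + 1 => br F (i + 1) * D i ^ rr F

/-- `L_0 = 1`, `L_i = [i] · L_{i-1}`. -/
def L : ℕ → K F
  | 0 => 1
  | i + 1 => br F (i + 1) * L i

/-- The Carlitz factorial `Π(n) = ∏_j D_j^{c_j}`, where `c_j = n / r^j % r` are the
base-`r` digits of `n` (all digits with index `> n` vanish since `r ≥ 2`). -/
def Cf (n : ℕ) : K F := ∏ j ∈ Finset.range (n + 1), D F j ^ (n / (rr F) ^ j % rr F)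

/-- The Carlitz logarithm `log_C(z) = Σ_{i ≥ 0} (-1)^i z^{r^i} / L_i`: the coefficient of
`z^m` is `(-1)^i / L_i` if `m = r^i` and `0` otherwise (note `i ≤ r^i = m` since `r ≥ 2`). -/
def logC : PowerSeries (K F) :=
  PowerSeries.mk fun m =>
    ∑ i ∈ Finset.range (m + 1), if m = (rr F) ^ i then (-1 : K F) ^ i / L F i else 0

/-- The Carlitz exponential `e_C(z) = Σ_{i ≥ 0} z^{r^i} / D_i`. -/
def eC : PowerSeries (K F) :=
  PowerSeries.mk fun m =>
    ∑ i ∈ Finset.range (m + 1), if m = (rr F) ^ i then 1 / D F i else 0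

/-- The power series `log_C(z)/z`. -/
def logCdivZ : PowerSeries (K F) :=
  PowerSeries.mk fun n => PowerSeries.coeff (n + 1) (logC F)

/-- The power series `e_C(z)/z`. -/
def eCdivZ : PowerSeries (K F) :=
  PowerSeries.mk fun n => PowerSeries.coeff (n + 1) (eC F)

/-!
By the defining relations of `S1C` and `S2C`, the sum is `Π(n)/Π(k)` times the coefficient of
`z^n` in `e_C(log_C z)^k`, so it suffices that `e_C(log_C z) = z`. Both series are `r`-linearized,
and as `r` is a power of the characteristic, `x ↦ x^(r^t)` is additive; hence composing
`∑ a_t z^(r^t)` with `∑ b_u z^(r^u)` gives `∑_N (∑_{t+u=N} a_t b_u^(r^t)) z^(r^N)`. For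
`e_C ∘ log_C` the inner sums `c_N` satisfy `c_0 = 1` and, from `[t+u] = [u]^(r^t) + [t]`,
`[N+1] c_(N+1) = c_N^r - c_N`; so `c_N = 0` for `N ≥ 1`.
-/

namespace PowerSeries

variable {R : Type*} [CommRing R]

theorem coeff_pow_expChar_pow (p : ℕ) [ExpChar R p] (f : R⟦X⟧) (k n : ℕ) :
    coeff n (f ^ p ^ k) = if p ^ k ∣ n then coeff (n / p ^ k) f ^ p ^ k else 0 := by
  rw [← MvPowerSeries.map_iterateFrobenius_expand p (expChar_ne_zero R p) f k]
  change coeff n (map (iterateFrobenius R p k) (expand (p ^ k) _ f)) = _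
  rw [coeff_map, coeff_expand]
  split_ifs
  · exact iterateFrobenius_def ..
  · exact map_zero _

theorem coeff_pow_eq_zero_of_lt {f : R⟦X⟧} (hf : constantCoeff f = 0) {n k : ℕ} (h : n < k) :
    coeff n (f ^ k) = 0 :=
  coeff_of_lt_order _ ((Nat.cast_lt.2 h).trans_le (le_order_pow_of_constantCoeff_eq_zero k hf))

theorem coeff_subst_pow {f g : R⟦X⟧} (hf : constantCoeff f = 0) (hg : constantCoeff g = 0)
    (k n : ℕ) :
    coeff n ((f ^ k).subst g) = ∑ m ∈ Icc k n, coeff m (f ^ k) * coeff n (g ^ m) := by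
  rw [coeff_subst' (HasSubst.of_constantCoeff_zero' hg),
    finsum_eq_sum_of_support_subset (s := Icc k n)]
  · rfl
  · intro m hm
    rw [Function.mem_support] at hm
    rw [Finset.coe_Icc, Set.mem_Icc]
    by_contra h
    rcases not_and_or.1 h with h | h
    · exact hm (by rw [coeff_pow_eq_zero_of_lt hf (not_le.1 h), zero_smul])
    · exact hm (by rw [coeff_pow_eq_zero_of_lt hg (not_le.1 h), smul_zero])

/-- The `q`-linearized series `∑ a i * X ^ q ^ i`. Its coefficients are written exactly as in `eC`
and `logC`, which are therefore `linearized` by definition. -/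
def linearized (q : ℕ) (a : ℕ → R) : R⟦X⟧ :=
  mk fun m => ∑ i ∈ range (m + 1), if m = q ^ i then a i else 0

section linearized

variable {q : ℕ} (a b : ℕ → R)

theorem coeff_linearized_pow (hq : 1 < q) (u : ℕ) : coeff (q ^ u) (linearized q a) = a u := by
  rw [linearized, coeff_mk, sum_eq_single u]
  · exact if_pos rfl
  · exact fun w _ hw => if_neg fun h => hw (Nat.pow_right_injective hq h.symm)
  · exact fun hu => absurd (mem_range.2 (Nat.lt_succ_of_lt (Nat.lt_pow_self hq))) hu

theorem coeff_linearized_of_ne {m : ℕ} (hm : ∀ u, m ≠ q ^ u) : coeff m (linearized q a) = 0 :=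
  (coeff_mk _ _).trans (sum_eq_zero fun u _ => if_neg (hm u))

theorem constantCoeff_linearized (hq : q ≠ 0) : constantCoeff (linearized q a) = 0 := by
  rw [← coeff_zero_eq_constantCoeff_apply]
  exact coeff_linearized_of_ne a fun u h => pow_ne_zero u hq h.symm

theorem linearized_ite_zero (hq : 1 < q) :
    linearized q (fun N => if N = 0 then (1 : R) else 0) = X := by
  ext m
  rw [coeff_X]
  by_cases hm : ∃ N, m = q ^ N
  · obtain ⟨N, rfl⟩ := hm
    simp only [coeff_linearized_pow _ hq, Nat.pow_eq_one, hq.ne', false_or]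
  · simp only [not_exists] at hm
    rw [coeff_linearized_of_ne _ hm, if_neg fun h => hm 0 (by rw [h, pow_zero])]

theorem coeff_subst_linearized (hq : 1 < q) {g : R⟦X⟧} (hg : HasSubst g) (n : ℕ) :
    coeff n ((linearized q a).subst g) = ∑ᶠ t, a t * coeff n (g ^ q ^ t) := by
  have hsupp : (Function.support fun d => coeff d (linearized q a) • coeff n (g ^ d)) ⊆
      Set.range (q ^ ·) := by
    intro d hd
    by_contra hd'
    rw [Function.mem_support, coeff_linearized_of_ne a fun u h => hd' ⟨u, h.symm⟩, zero_smul] at hd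
    exact hd rfl
  rw [coeff_subst' hg, ← Set.indicator_eq_self.2 hsupp, ← finsum_mem_def,
    finsum_mem_range (Nat.pow_right_injective hq)]
  exact finsum_congr fun t => by rw [coeff_linearized_pow a hq, smul_eq_mul]

variable {p s : ℕ} [ExpChar R p]

theorem linearized_pow_pow (hqp : q = p ^ s) (hq : 1 < q) (t : ℕ) :
    linearized q b ^ q ^ t = linearized q (fun N => if t ≤ N then b (N - t) ^ q ^ t else 0) := by
  ext n
  have hqt : q ^ t = p ^ (s * t) := by rw [hqp, pow_mul]
  rw [hqt, coeff_pow_expChar_pow, ← hqt]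
  by_cases hn : ∃ N, n = q ^ N
  · obtain ⟨N, rfl⟩ := hn
    rw [coeff_linearized_pow _ hq]
    split_ifs with hdvd htN htN
    · rw [Nat.pow_div htN (by omega), coeff_linearized_pow _ hq]
    · exact absurd ((Nat.pow_dvd_pow_iff_le_right hq).1 hdvd) htN
    · exact absurd (pow_dvd_pow q htN) hdvd
    · rfl
  · simp only [not_exists] at hn
    rw [coeff_linearized_of_ne _ hn]
    split_ifs with hdvd
    · refine (congrArg (· ^ q ^ t) (coeff_linearized_of_ne b fun u hu => hn (t + u) ?_)).trans
        (zero_pow (pow_ne_zero t (by omega)))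
      rw [pow_add, ← hu, Nat.mul_div_cancel' hdvd]
    · rfl

theorem linearized_subst_linearized (hqp : q = p ^ s) (hq : 1 < q) :
    (linearized q a).subst (linearized q b) =
      linearized q (fun N => ∑ x ∈ antidiagonal N, a x.1 * b x.2 ^ q ^ x.1) := by
  ext n
  rw [coeff_subst_linearized a hq
    (HasSubst.of_constantCoeff_zero' (constantCoeff_linearized b (by omega)))]
  simp_rw [linearized_pow_pow b hqp hq]
  by_cases hn : ∃ N, n = q ^ N
  · obtain ⟨N, rfl⟩ := hn
    simp_rw [coeff_linearized_pow _ hq]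
    rw [Nat.sum_antidiagonal_eq_sum_range_succ (fun t u => a t * b u ^ q ^ t),
      finsum_eq_sum_of_support_subset (s := range (N + 1))]
    · exact sum_congr rfl fun t ht => by rw [if_pos (Nat.lt_succ_iff.1 (mem_range.1 ht))]
    · intro t ht
      rw [Function.mem_support] at ht
      rw [Finset.coe_range, Set.mem_Iio]
      by_contra h
      exact ht (by rw [if_neg (by omega), mul_zero])
  · simp only [not_exists] at hn
    simp_rw [coeff_linearized_of_ne _ hn, mul_zero, finsum_zero]

end linearized

end PowerSeries

theorem one_lt_rr : 1 < rr F := Fintype.one_lt_card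

theorem exists_expChar_rr_eq_pow : ∃ p s : ℕ, ExpChar (K F) p ∧ rr F = p ^ s := by
  obtain ⟨p, _, n, hp, hcard⟩ := FiniteField.card' F
  have := charP_of_injective_algebraMap' F (A := K F) p
  exact ⟨p, n, .prime hp, hcard⟩

theorem sub_pow_rr_pow (x y : K F) (t : ℕ) :
    (x - y) ^ rr F ^ t = x ^ rr F ^ t - y ^ rr F ^ t := by
  obtain ⟨p, s, _, hr⟩ := exists_expChar_rr_eq_pow F
  rw [hr, ← pow_mul]
  exact sub_pow_expChar_pow ..

theorem neg_pow_rr_pow (x : K F) (t : ℕ) : (-x) ^ rr F ^ t = -x ^ rr F ^ t := by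
  rw [neg_eq_zero_sub, sub_pow_rr_pow, zero_pow (pow_ne_zero t (one_lt_rr F).ne_bot), zero_sub]

theorem sum_pow_rr {ι : Type*} (s : Finset ι) (f : ι → K F) :
    (∑ i ∈ s, f i) ^ rr F = ∑ i ∈ s, f i ^ rr F :=
  map_sum (FiniteField.frobeniusAlgHom F (K F)) f s

theorem br_zero : br F 0 = 0 := by simp [br]

theorem br_add (t u : ℕ) : br F (t + u) = br F u ^ rr F ^ t + br F t := by
  simp only [br, sub_pow_rr_pow, ← pow_mul, ← pow_add, add_comm u t]
  ring

theorem br_ne_zero {i : ℕ} (hi : i ≠ 0) : br F i ≠ 0 := by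
  have h : br F i = algebraMap (Polynomial F) (K F) (Polynomial.X ^ rr F ^ i - Polynomial.X) := by
    simp [br, Tv, RatFunc.algebraMap_X]
  rw [h, map_ne_zero_iff _ (RatFunc.algebraMap_injective F)]
  exact FiniteField.X_pow_card_pow_sub_X_ne_zero F hi (one_lt_rr F)

theorem D_ne_zero (i : ℕ) : D F i ≠ 0 := by
  induction i with
  | zero => exact one_ne_zero
  | succ i ih => exact mul_ne_zero (br_ne_zero F i.succ_ne_zero) (pow_ne_zero _ ih)

theorem L_ne_zero (i : ℕ) : L F i ≠ 0 := by
  induction i with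
  | zero => exact one_ne_zero
  | succ i ih => exact mul_ne_zero (br_ne_zero F i.succ_ne_zero) ih

theorem Cf_ne_zero (n : ℕ) : Cf F n ≠ 0 :=
  prod_ne_zero_iff.2 fun j _ => pow_ne_zero _ (D_ne_zero F j)

def expLogTerm (t u : ℕ) : K F := 1 / D F t * ((-1) ^ u / L F u) ^ rr F ^ t

/-- The coefficient of `z ^ r ^ N` in `e_C (log_C z)`. -/
def expLogCoeff (N : ℕ) : K F := ∑ x ∈ antidiagonal N, expLogTerm F x.1 x.2

theorem br_pow_mul_expLogTerm_succ (t u : ℕ) :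
    br F (u + 1) ^ rr F ^ t * expLogTerm F t (u + 1) = -expLogTerm F t u := by
  have h : br F (u + 1) * ((-1) ^ (u + 1) / L F (u + 1)) = -((-1) ^ u / L F u) := by
    rw [L, pow_succ]
    field_simp [br_ne_zero F u.succ_ne_zero, L_ne_zero F u]
  rw [expLogTerm, expLogTerm, mul_left_comm, ← mul_pow, h, neg_pow_rr_pow, mul_neg]

theorem br_mul_expLogTerm_succ (t u : ℕ) :
    br F (t + 1) * expLogTerm F (t + 1) u = expLogTerm F t u ^ rr F := by
  rw [expLogTerm, expLogTerm, D, pow_succ, pow_mul, mul_pow, one_div_pow]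
  field_simp [br_ne_zero F t.succ_ne_zero, D_ne_zero F t]

theorem br_mul_expLogCoeff_succ (N : ℕ) :
    br F (N + 1) * expLogCoeff F (N + 1) = expLogCoeff F N ^ rr F - expLogCoeff F N := by
  have hsplit : ∀ x ∈ antidiagonal (N + 1), br F (N + 1) * expLogTerm F x.1 x.2 =
      br F x.2 ^ rr F ^ x.1 * expLogTerm F x.1 x.2 + br F x.1 * expLogTerm F x.1 x.2 :=
    fun x hx => by rw [← mem_antidiagonal.1 hx, br_add, add_mul]
  rw [expLogCoeff, mul_sum, sum_congr rfl hsplit, sum_add_distrib, Nat.sum_antidiagonal_succ',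
    Nat.sum_antidiagonal_succ]
  simp only [br_zero, zero_pow (pow_ne_zero _ (one_lt_rr F).ne_bot), zero_mul, zero_add,
    br_pow_mul_expLogTerm_succ, br_mul_expLogTerm_succ, sum_neg_distrib, expLogCoeff, sum_pow_rr]
  ring

theorem expLogCoeff_eq (N : ℕ) : expLogCoeff F N = if N = 0 then 1 else 0 := by
  induction N with
  | zero => simp [expLogCoeff, expLogTerm, D, L]
  | succ N ih =>
    have h := br_mul_expLogCoeff_succ F N
    rw [ih] at h
    split_ifs at h
    · rw [one_pow, sub_self] at h
      exact (mul_eq_zero.1 h).resolve_left (br_ne_zero F N.succ_ne_zero)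
    · rw [zero_pow (one_lt_rr F).ne_bot, sub_self] at h
      exact (mul_eq_zero.1 h).resolve_left (br_ne_zero F N.succ_ne_zero)

theorem constantCoeff_eC : constantCoeff (eC F) = 0 :=
  constantCoeff_linearized _ (one_lt_rr F).ne_bot

theorem constantCoeff_logC : constantCoeff (logC F) = 0 :=
  constantCoeff_linearized _ (one_lt_rr F).ne_bot

theorem eC_subst_logC : (eC F).subst (logC F) = X := by
  obtain ⟨p, s, _, hr⟩ := exists_expChar_rr_eq_pow F
  change (linearized (rr F) _).subst (linearized (rr F) _) = X
  rw [linearized_subst_linearized _ _ hr (one_lt_rr F)]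
  change linearized (rr F) (expLogCoeff F) = X
  rw [funext (expLogCoeff_eq F)]
  exact linearized_ite_zero (one_lt_rr F)

theorem sum_coeff_logC_pow_mul_coeff_eC_pow (n k : ℕ) :
    ∑ m ∈ Icc k n, coeff n (logC F ^ m) * coeff m (eC F ^ k) = if n = k then 1 else 0 := by
  rw [← coeff_X_pow, ← eC_subst_logC, ← subst_pow
    (HasSubst.of_constantCoeff_zero' (constantCoeff_logC F)),
    coeff_subst_pow (constantCoeff_eC F) (constantCoeff_logC F)]
  exact sum_congr rfl fun m _ => mul_comm _ _

theorem stirlingCarlitz_orthogonality_first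
    (S1C S2C : ℕ → ℕ → K F)
    (hS1C : ∀ n k : ℕ,
      PowerSeries.coeff n (logC F ^ k) / Cf F k = S1C n k / Cf F n)
    (hS2C : ∀ n k : ℕ,
      PowerSeries.coeff n (eC F ^ k) / Cf F k = S2C n k / Cf F n)
    (n k : ℕ) :
    ∑ m ∈ Finset.Icc k n, S1C n m * S2C m k = if n = k then (1 : K F) else 0 := by
  have hCf := Cf_ne_zero F
  have hS1 (m : ℕ) : S1C n m = coeff n (logC F ^ m) * Cf F n / Cf F m :=
    eq_div_of_mul_eq (hCf m) ((div_eq_div_iff (hCf m) (hCf n)).1 (hS1C n m)).symm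
  have hS2 (m : ℕ) : S2C m k = coeff m (eC F ^ k) * Cf F m / Cf F k :=
    eq_div_of_mul_eq (hCf k) ((div_eq_div_iff (hCf k) (hCf m)).1 (hS2C m k)).symm
  calc ∑ m ∈ Icc k n, S1C n m * S2C m k
      = Cf F n / Cf F k * ∑ m ∈ Icc k n, coeff n (logC F ^ m) * coeff m (eC F ^ k) := by
        rw [mul_sum]
        refine sum_congr rfl fun m _ => ?_
        rw [hS1, hS2]
        field_simp [hCf m]
    _ = if n = k then 1 else 0 := by
        rw [sum_coeff_logC_pow_mul_coeff_eC_pow]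
        split_ifs with h
        · rw [h, div_self (hCf k), mul_one]
        · rw [mul_zero]
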